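/- arXiv:1111.0235 — 2 statements merged into one kernel-verified Lean document; each statement's English description precedes it below -/
import Mathlib

section
/- Let K = (a_{ij}) be an m×m complex matrix (m ≥ 2) and let K_θ = E[M_σ K M_σ^*] with σ Ewens-distributed with parameter θ > 0. Then for i ≠ j, (K_θ)_{ij} = [ (θ²−1) a_{ij} + (θ−1) a_{ji} + (θ−1) Σ_{k ≠ i,j} (a_{ik} + a_{kj}) + Σ_{l ≠ k} a_{lk} ] / ((θ+m−2)(θ+m−1)). -/
/-
Every permutation of `α` is uniquely of the form `swap x a * e`, with `e` a permutation fixing `x`,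
and passing from `e` to `swap x a * e` creates a new cycle exactly when `a = x` (otherwise `x` is
inserted into the cycle of `a`). Summing `θ ^ (number of cycles)` over this decomposition gives
`θ (θ + 1) ⋯ (θ + n - 1)` and, fixing first `σ x` and then `σ j`, the Ewens probability of
`σ i = a ∧ σ j = b` is `θ ^ ([a = i] + [b = j] + [(a, b) = (j, i)]) / ((θ + m - 2) (θ + m - 1))`.
As `(M_σ K M_σ*)_{ij} = K_{σ i, σ j}`, the expectation is the corresponding weighted sum of the
off-diagonal entries of `K`, which rearranges into the stated formula.
-/

open Matrix

/-- The number of cycles of `σ` (including fixed points as 1-cycles). -/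
def cycleCount {m : ℕ} (σ : Equiv.Perm (Fin m)) : ℕ :=
  (m - σ.support.card) + σ.cycleType.card

/-- The Ewens measure with parameter `θ` on the symmetric group. -/
noncomputable def ewens {m : ℕ} (θ : ℝ) (σ : Equiv.Perm (Fin m)) : ℝ :=
  θ ^ cycleCount σ / ∏ k ∈ Finset.range m, (θ + k)

/-- The permutation matrix of `σ`, whose `i`-th row is the standard basis vector `e_{σ i}`. -/
def permMat {m : ℕ} (σ : Equiv.Perm (Fin m)) : Matrix (Fin m) (Fin m) ℂ :=
  Matrix.of fun i j => if j = σ i then 1 else 0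

open Finset Equiv

/-- Relative Ewens weight of the event `σ i = a ∧ σ j = b` for `q = (a, b)`: each of `a = i`,
`b = j` and `(a, b) = (j, i)` closes a cycle, contributing a factor `θ`. -/
def pairWeight {α R : Type*} [DecidableEq α] [Monoid R] (θ : R) (i j : α) (q : α × α) : R :=
  (if q.1 = i then θ else 1) * (if q.2 = j then θ else 1) * (if q.1 = j ∧ q.2 = i then θ else 1)

namespace Equiv.Perm

variable {α : Type*} [DecidableEq α]

lemma swap_mul_ofSubtype_apply_self (x a : α) (e : Perm {y // y ≠ x}) :
    (swap x a * ofSubtype e) x = a := by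
  simp [ofSubtype_apply_of_not_mem]

lemma swap_mul_ofSubtype_apply_of_ne {x y : α} (a : α) (e : Perm {y // y ≠ x}) (hy : y ≠ x) :
    (swap x a * ofSubtype e) y = swap x a (e ⟨y, hy⟩) := by
  simp [ofSubtype_apply_of_mem e hy]

variable [Fintype α]

def numCycles (σ : Perm α) : ℕ := Fintype.card α - #σ.support + Multiset.card σ.cycleType

@[simp] lemma numCycles_one : numCycles (1 : Perm α) = Fintype.card α := by
  simp [numCycles]

lemma Disjoint.numCycles_mul_add_card {σ τ : Perm α} (h : Disjoint σ τ) :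
    numCycles (σ * τ) + Fintype.card α = numCycles σ + numCycles τ := by
  have hσ := card_le_univ σ.support
  have hτ := card_le_univ τ.support
  have hστ := card_le_univ (σ * τ).support
  rw [h.card_support_mul] at hστ
  simp only [numCycles, h.cycleType_mul, h.card_support_mul, Multiset.card_add]
  omega

lemma IsCycle.numCycles_add_card_support {c : Perm α} (hc : c.IsCycle) :
    numCycles c + #c.support = Fintype.card α + 1 := by
  have := card_le_univ c.support
  rw [numCycles, hc.cycleType, Multiset.card_singleton]
  omega

lemma IsCycle.numCycles_swap_mul_self {c : Perm α} (hc : c.IsCycle) {x : α} (hx : c x ≠ x) :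
    numCycles (swap x (c x) * c) = numCycles c + 1 := by
  have hc_card := hc.numCycles_add_card_support
  by_cases hccx : c (c x) = x
  · have hsw : c = swap x (c x) := hc.eq_swap_of_apply_apply_eq_self hx hccx
    have hsupp : #c.support = 2 := by rw [hsw]; exact card_support_swap (Ne.symm hx)
    have hone : swap x (c x) * c = 1 := by
      calc swap x (c x) * c = swap x (c x) * swap x (c x) := congrArg _ hsw
        _ = 1 := swap_mul_self _ _
    rw [hone, numCycles_one]
    omega
  · have hxs : x ∈ c.support := mem_support.mpr hx
    have hc'_card := (hc.swap_mul hx hccx).numCycles_add_card_support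
    rw [support_swap_mul_eq c x hccx, card_sdiff_of_subset (singleton_subset_iff.mpr hxs),
      card_singleton] at hc'_card
    have := card_pos.mpr ⟨x, hxs⟩
    omega

/-- Multiplying by `swap x (σ x)` splits `x` off its cycle as a fixed point. -/
lemma numCycles_swap_mul_self {σ : Perm α} {x : α} (hx : σ x ≠ x) :
    numCycles (swap x (σ x) * σ) = numCycles σ + 1 := by
  set c := σ.cycleOf x
  have hc : c.IsCycle := isCycle_cycleOf σ hx
  have hcx : c x = σ x := cycleOf_apply_self σ x
  have hcx' : c x ≠ x := hcx ▸ hx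
  have hd : Disjoint (σ * c⁻¹) c :=
    disjoint_mul_inv_of_mem_cycleFactorsFinset
      (cycleOf_mem_cycleFactorsFinset_iff.mpr (mem_support.mpr hx))
  have hd_swap : Disjoint (σ * c⁻¹) (swap x (c x)) := by
    refine disjoint_iff_disjoint_support.mpr
      (disjoint_of_subset_right ?_ (disjoint_iff_disjoint_support.mp hd))
    rw [support_swap hcx'.symm, insert_subset_iff, singleton_subset_iff, apply_mem_support,
      and_self]
    exact mem_support.mpr hcx'
  have hσ : σ = σ * c⁻¹ * c := (inv_mul_cancel_right σ c).symm
  have hsplit : swap x (σ x) * σ = σ * c⁻¹ * (swap x (c x) * c) := by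
    calc swap x (σ x) * σ = swap x (c x) * (σ * c⁻¹ * c) := by rw [← hσ, hcx]
      _ = _ := by rw [← mul_assoc, ← hd_swap.commute.eq, mul_assoc]
  have h₁ := hd.numCycles_mul_add_card
  have h₂ := (hd_swap.mul_right hd).numCycles_mul_add_card
  rw [← hσ] at h₁
  rw [← hsplit, hc.numCycles_swap_mul_self hcx'] at h₂
  omega

lemma numCycles_ofSubtype {p : α → Prop} [DecidablePred p] (g : Perm (Subtype p)) :
    numCycles (ofSubtype g) = numCycles g + Fintype.card {a // ¬p a} := by
  have hg := card_le_univ g.support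
  have hp : Fintype.card {a // ¬p a} = Fintype.card α - Fintype.card (Subtype p) :=
    Fintype.card_subtype_compl p
  have : Fintype.card (Subtype p) ≤ Fintype.card α := Fintype.card_subtype_le p
  rw [numCycles, numCycles, cycleType_ofSubtype, support_ofSubtype, card_map]
  omega

lemma numCycles_swap_mul_ofSubtype (x a : α) (e : Perm {y // y ≠ x}) :
    numCycles (swap x a * ofSubtype e) = numCycles e + if a = x then 1 else 0 := by
  have he : numCycles (ofSubtype e) = numCycles e + 1 := by
    rw [numCycles_ofSubtype]
    simp
  split_ifs with hax
  · rw [hax, swap_self, ← one_def, one_mul, he]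
  · have hfix : ofSubtype e x = x := ofSubtype_apply_of_not_mem e (not_not.mpr rfl)
    have key := numCycles_swap_mul_self (σ := swap x a * ofSubtype e) (x := x)
    simp only [coe_mul, Function.comp_apply, hfix, swap_apply_left, swap_mul_self_mul] at key
    have := key hax
    omega

lemma bijective_swap_mul_ofSubtype (x : α) :
    Function.Bijective fun p : α × Perm {y // y ≠ x} => swap x p.1 * ofSubtype p.2 := by
  refine (Fintype.bijective_iff_injective_and_card _).mpr ⟨?_, ?_⟩
  · rintro ⟨a, e⟩ ⟨b, f⟩ h
    have hab : a = b := by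
      simpa [swap_mul_ofSubtype_apply_self] using congrArg (· x) h
    subst hab
    simpa using ofSubtype_injective (mul_left_cancel h)
  · have : Fintype.card {y // y ≠ x} = Fintype.card α - 1 := by simp
    rw [Fintype.card_prod, Fintype.card_perm, Fintype.card_perm, this,
      Nat.mul_factorial_pred (Fintype.card_pos_iff.mpr ⟨x⟩).ne']

lemma sum_perm_eq_sum_swap_mul_ofSubtype {M : Type*} [AddCommMonoid M] (x : α)
    (f : Perm α → M) :
    ∑ σ, f σ = ∑ a, ∑ e : Perm {y // y ≠ x}, f (swap x a * ofSubtype e) := by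
  rw [← Fintype.sum_prod_type', (bijective_swap_mul_ofSubtype x).sum_comp f]

variable {R : Type*} [CommSemiring R]

lemma pow_numCycles_swap_mul_ofSubtype (θ : R) (x a : α) (e : Perm {y // y ≠ x}) :
    θ ^ numCycles (swap x a * ofSubtype e) = (if a = x then θ else 1) * θ ^ numCycles e := by
  rw [numCycles_swap_mul_ofSubtype, pow_add, mul_comm]
  split_ifs <;> simp

theorem sum_pow_numCycles (θ : R) :
    ∑ σ : Perm α, θ ^ numCycles σ = ∏ k ∈ range (Fintype.card α), (θ + k) := by
  obtain ⟨n, hn⟩ : ∃ n, Fintype.card α = n := ⟨_, rfl⟩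
  induction n generalizing α with
  | zero =>
    have : IsEmpty α := Fintype.card_eq_zero_iff.mp hn
    rw [hn, prod_range_zero, Fintype.sum_subsingleton _ 1, numCycles_one, hn, pow_zero]
  | succ n ih =>
    obtain ⟨x⟩ : Nonempty α := Fintype.card_pos_iff.mp (by omega)
    have hcard : Fintype.card {y // y ≠ x} = n := by simp [hn]
    simp only [sum_perm_eq_sum_swap_mul_ofSubtype x, pow_numCycles_swap_mul_ofSubtype,
      ← Finset.sum_mul_sum, ih hcard, hn, prod_range_succ]
    rw [hcard, Finset.sum_ite, filter_eq', filter_ne']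
    simp [hn, mul_comm]

theorem sum_pow_numCycles_of_apply_eq (θ : R) (x a : α) :
    ∑ σ : Perm α, (if σ x = a then θ ^ numCycles σ else 0)
      = (if a = x then θ else 1) * ∏ k ∈ range (Fintype.card α - 1), (θ + k) := by
  simp [sum_perm_eq_sum_swap_mul_ofSubtype x, pow_numCycles_swap_mul_ofSubtype,
    swap_mul_ofSubtype_apply_self, ← Finset.mul_sum, sum_pow_numCycles]

theorem sum_pow_numCycles_of_apply_eq_of_apply_eq (θ : R) {x j a b : α} (hjx : j ≠ x)
    (hab : a ≠ b) :
    ∑ σ : Perm α, (if σ x = a ∧ σ j = b then θ ^ numCycles σ else 0)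
      = pairWeight θ x j (a, b) * ∏ k ∈ range (Fintype.card α - 2), (θ + k) := by
  have hb : swap x a b ≠ x := by
    rw [Ne, swap_apply_eq_iff, swap_apply_left]
    exact hab.symm
  have hcond : ∀ e : Perm {y // y ≠ x},
      swap x a (e ⟨j, hjx⟩) = b ↔ e ⟨j, hjx⟩ = ⟨swap x a b, hb⟩ := fun e => by
    rw [swap_apply_eq_iff, Subtype.ext_iff]
  have hweight : (if a = x then θ else 1)
        * (if (⟨swap x a b, hb⟩ : {y // y ≠ x}) = ⟨j, hjx⟩ then θ else 1)
      = pairWeight θ x j (a, b) := by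
    rw [pairWeight]
    by_cases hax : a = x
    · subst hax
      simp [hjx.symm]
    · by_cases hbx : b = x
      · subst hbx
        simp [hax, hjx.symm, eq_comm]
      · simp [hax, hbx, swap_apply_of_ne_of_ne hbx (Ne.symm hab)]
  have hcard : Fintype.card {y // y ≠ x} - 1 = Fintype.card α - 2 := by
    simp only [ne_eq, Fintype.card_subtype_compl, Fintype.card_unique]
    omega
  rw [← hweight, ← hcard, mul_assoc, ← sum_pow_numCycles_of_apply_eq, Finset.mul_sum,
    sum_perm_eq_sum_swap_mul_ofSubtype x, Finset.sum_comm]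
  simp only [swap_mul_ofSubtype_apply_self, swap_mul_ofSubtype_apply_of_ne _ _ hjx,
    pow_numCycles_swap_mul_ofSubtype, ite_and, Finset.sum_ite_eq', mem_univ, if_true, hcond,
    mul_ite, mul_zero]

end Equiv.Perm

section OffDiag

variable {α : Type*} [Fintype α] [DecidableEq α]

lemma Finset.sum_univ_offDiag {M : Type*} [AddCommGroup M] (f : α × α → M) :
    ∑ q ∈ univ.offDiag, f q = ∑ a, ∑ b, f (a, b) - ∑ a, f (a, a) := by
  rw [← product_sdiff_diag, sum_sdiff_eq_sub (by simp [subset_iff]), sum_product, Finset.diag,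
    sum_map]
  rfl

lemma sum_offDiag_pairWeight_mul {R : Type*} [CommRing R] (θ : R) (K : Matrix α α R)
    {i j : α} (hij : i ≠ j) :
    ∑ q ∈ univ.offDiag, pairWeight θ i j q * K q.1 q.2
      = (θ ^ 2 - 1) * K i j + (θ - 1) * K j i + (θ - 1) * ∑ k ∈ univ \ {i, j}, (K i k + K k j)
        + ∑ q ∈ univ.offDiag, K q.1 q.2 := by
  have hweight : ∀ a b, pairWeight θ i j (a, b) * K a b
      = K a b + (θ - 1) * ((if a = i then K a b else 0) + (if b = j then K a b else 0)
          + (if a = j ∧ b = i then K a b else 0))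
        + (θ - 1) ^ 2 * (if a = i ∧ b = j then K a b else 0) := by
    intro a b
    rw [pairWeight]
    split_ifs <;> simp_all <;> ring
  have hpair : ∀ g : α → R, ∑ k ∈ univ \ {i, j}, g k = ∑ k, g k - g i - g j := fun g => by
    rw [sum_sdiff_eq_sub (subset_univ _), sum_pair hij]
    ring
  simp only [Finset.sum_univ_offDiag, hweight, hpair, sum_add_distrib, ← mul_sum]
  simp only [sum_ite_irrel, sum_const_zero, sum_ite_eq', mem_univ, ↓reduceIte, ite_and, hij.symm,
    sub_zero, hij]
  ring

end OffDiag

lemma permMat_mul_mul_conjTranspose_apply {m : ℕ} (σ : Perm (Fin m))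
    (K : Matrix (Fin m) (Fin m) ℂ) (i j : Fin m) :
    (permMat σ * K * (permMat σ)ᴴ) i j = K (σ i) (σ j) := by
  simp [permMat, Matrix.mul_apply, apply_ite (starRingEnd ℂ)]

lemma cycleCount_eq_numCycles {m : ℕ} (σ : Perm (Fin m)) : cycleCount σ = σ.numCycles := by
  rw [cycleCount, Perm.numCycles, Fintype.card_fin]

lemma sum_ewens_of_apply_eq_of_apply_eq {m : ℕ} {θ : ℝ} (hθ : 0 < θ) {i j a b : Fin m}
    (hij : i ≠ j) (hab : a ≠ b) :
    ∑ σ : Perm (Fin m) with σ i = a ∧ σ j = b, ewens θ σ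
      = pairWeight θ i j (a, b) / ((θ + m - 2) * (θ + m - 1)) := by
  obtain ⟨n, rfl⟩ : ∃ n, m = n + 2 := ⟨m - 2, by have := Fin.val_ne_of_ne hij; omega⟩
  have hprod : ∏ k ∈ range (n + 2), (θ + k)
      = (∏ k ∈ range n, (θ + k)) * ((θ + (n + 2 : ℕ) - 2) * (θ + (n + 2 : ℕ) - 1)) := by
    rw [prod_range_succ, prod_range_succ]
    push_cast
    ring
  have hpos : 0 < ∏ k ∈ range n, (θ + k) := prod_pos fun k _ => by positivity
  simp only [ewens, cycleCount_eq_numCycles, ← sum_div, sum_filter,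
    Perm.sum_pow_numCycles_of_apply_eq_of_apply_eq θ hij.symm hab, Fintype.card_fin, hprod,
    Nat.add_sub_cancel]
  rw [mul_comm _ (∏ k ∈ range n, (θ + k)), mul_div_mul_left _ _ hpos.ne']

theorem stmt_6_general {m : ℕ} (θ : ℝ) (hθ : 0 < θ)
    (K : Matrix (Fin m) (Fin m) ℂ) (i j : Fin m) (hij : i ≠ j) :
    (∑ σ : Equiv.Perm (Fin m), ewens θ σ • (permMat σ * K * (permMat σ)ᴴ)) i j
      = ( ((θ ^ 2 - 1 : ℝ) : ℂ) * K i j + ((θ - 1 : ℝ) : ℂ) * K j i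
          + ((θ - 1 : ℝ) : ℂ) * ∑ k ∈ Finset.univ \ {i, j}, (K i k + K k j)
          + ∑ q ∈ Finset.univ.offDiag, K q.1 q.2 )
        / (((θ + m - 2) * (θ + m - 1) : ℝ) : ℂ) := by
  have hmaps : ∀ σ ∈ (univ : Finset (Perm (Fin m))), (σ i, σ j) ∈ univ.offDiag := fun σ _ => by
    simpa using hij
  calc (∑ σ : Perm (Fin m), ewens θ σ • (permMat σ * K * (permMat σ)ᴴ)) i j
      = ∑ σ : Perm (Fin m), (ewens θ σ : ℂ) * K (σ i) (σ j) := by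
        simp [Matrix.sum_apply, permMat_mul_mul_conjTranspose_apply, Complex.real_smul]
    _ = ∑ q ∈ univ.offDiag,
          ((∑ σ : Perm (Fin m) with (σ i, σ j) = q, ewens θ σ : ℝ) : ℂ) * K q.1 q.2 := by
        rw [← sum_fiberwise_of_maps_to hmaps]
        refine sum_congr rfl fun q _ => ?_
        rw [Complex.ofReal_sum, sum_mul]
        refine sum_congr rfl fun σ hσ => ?_
        obtain rfl := (mem_filter.mp hσ).2
        rfl
    _ = ∑ q ∈ univ.offDiag,
          ((pairWeight θ i j q / ((θ + m - 2) * (θ + m - 1)) : ℝ) : ℂ) * K q.1 q.2 := by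
        refine sum_congr rfl fun q hq => ?_
        simp only [Prod.ext_iff, sum_ewens_of_apply_eq_of_apply_eq hθ hij (mem_offDiag.mp hq).2.2]
    _ = (∑ q ∈ univ.offDiag, pairWeight (θ : ℂ) i j q * K q.1 q.2)
          / (((θ + m - 2) * (θ + m - 1) : ℝ) : ℂ) := by
        rw [sum_div]
        refine sum_congr rfl fun q _ => ?_
        push_cast [pairWeight, apply_ite ((↑) : ℝ → ℂ)]
        ring
    _ = _ := by
        rw [sum_offDiag_pairWeight_mul _ K hij]
        push_cast
        ring

theorem stmt_6 {m : ℕ} (hm : 2 ≤ m) (θ : ℝ) (hθ : 0 < θ)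
    (K : Matrix (Fin m) (Fin m) ℂ) (i j : Fin m) (hij : i ≠ j) :
    (∑ σ : Equiv.Perm (Fin m), ewens θ σ • (permMat σ * K * (permMat σ)ᴴ)) i j
      = ( ((θ ^ 2 - 1 : ℝ) : ℂ) * K i j + ((θ - 1 : ℝ) : ℂ) * K j i
          + ((θ - 1 : ℝ) : ℂ) * ∑ k ∈ Finset.univ \ {i, j}, (K i k + K k j)
          + ∑ q ∈ Finset.univ.offDiag, K q.1 q.2 )
        / (((θ + m - 2) * (θ + m - 1) : ℝ) : ℂ) :=
  stmt_6_general θ hθ K i j hij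
end

section
/- With the notation of the hybrid Ewens estimator: for 1 ≤ i < j ≤ p, (K_{θ,m,p})_{ij} = ((θ+p−1)(θ+p−2)/((θ+m−1)(θ+m−2))) a_{ij}; for 1 ≤ i ≤ p < j ≤ m, (K_{θ,m,p})_{ij} = ((p−1)(θ+p−1)/((θ+m−1)(θ+m−2))) a_{ij}; and for p < i < j ≤ m, (K_{θ,m,p})_{ij} = (p(p−1)/((θ+m−1)(θ+m−2))) a_{ij}. -/
open Matrix

/-- The measure on injections `{1,…,p} → {1,…,m}`: the Ewens probability of the set of
permutations of `{1,…,m}` whose restriction to `{1,…,p}` equals `σ`. -/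
noncomputable def extMeasure {p m : ℕ} (h : p ≤ m) (θ : ℝ) (σ : Fin p ↪ Fin m) : ℝ :=
  ∑ τ ∈ Finset.univ.filter
      (fun τ : Equiv.Perm (Fin m) => ∀ i : Fin p, τ (Fin.castLE h i) = σ i),
    ewens θ τ

/-- The `p × m` matrix whose `i`-th row is the standard basis row vector `e_{σ i}`. -/
def Vmat {p m : ℕ} (σ : Fin p ↪ Fin m) : Matrix (Fin p) (Fin m) ℂ :=
  Matrix.of fun i j => if j = σ i then 1 else 0

/-! The Gram matrix `Vᵀ V` is the diagonal projection onto the image of `σ`, so the `(i, j)` entry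
of the kernel is `a_{ij}` times the Ewens probability that `τ⁻¹ i` and `τ⁻¹ j` both lie in
`S = {0, …, p-1}`, and by inversion invariance of the Ewens measure that `τ i, τ j ∈ S`.

Writing `τ = swap 0 q * τ'` with `τ' 0 = 0` multiplies the weight `θ ^ #cycles` by `θ` exactly when
`q = 0` (otherwise `0` is spliced into the cycle of `q`). Hence `∑ θ ^ #cycles = θ (θ+1) ⋯ (θ+n-1)`,
and conditioning on `τ a = b` leaves a permutation in which `a` and `b` are merged, which gives the
two-point weight `θ^[a = b] θ^[c = (a b) d] θ (θ+1) ⋯ (θ+n-3)` of `{τ a = b, τ c = d}`. Summing it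
over distinct `k, l ∈ S` gives `(p + (θ-1)[i ∈ S]) (p - 1 + (θ-1)[j ∈ S])` when `j ∈ S → i ∈ S`.
-/

open Equiv Finset

namespace Equiv.Perm

variable {α : Type*} [Fintype α] [DecidableEq α]

theorem IsCycle.card_support_swap_mul_add_two {c : Perm α} (hc : c.IsCycle) {x : α}
    (hx : c x ≠ x) :
    #(swap x (c x) * c).support + 2 = #c.support + (swap x (c x) * c).cycleType.card := by
  by_cases hcc : c (c x) = x
  · have hswap := hc.eq_swap_of_apply_apply_eq_self hx hcc
    have hone : swap x (c x) * c = 1 := by nth_rw 2 [hswap]; exact swap_mul_self _ _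
    rw [hone, hswap, card_support_swap hx.symm]
    simp
  · rw [(hc.swap_mul hx hcc).cycleType, support_swap_mul_eq c x hcc,
      card_sdiff_of_subset (singleton_subset_iff.2 (mem_support.2 hx))]
    have : 0 < #c.support := card_pos.2 ⟨x, mem_support.2 hx⟩
    simp only [card_singleton, Multiset.card_singleton]
    omega

/-- Only the cycle of `x` changes: it loses `x`, which becomes a fixed point. -/
theorem card_parts_partition_swap_mul {g : Perm α} {x : α} (hx : g x ≠ x) :
    (swap x (g x) * g).partition.parts.card = g.partition.parts.card + 1 := by
  set c := g.cycleOf x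
  set r := g * c⁻¹
  have hc : c.IsCycle := isCycle_cycleOf g hx
  have hcx : c x = g x := cycleOf_apply_self g x
  have hdisj : Disjoint c r := (disjoint_mul_inv_of_mem_cycleFactorsFinset
    (cycleOf_mem_cycleFactorsFinset_iff.2 (mem_support.2 hx))).symm
  have hg : g = c * r := by rw [hdisj.commute.eq, inv_mul_cancel_right]
  clear_value r c
  subst hg
  rw [← hcx, ← mul_assoc]
  have hdisj' : Disjoint (swap x (c x) * c) r :=
    hdisj.mono (fun y hy => (mem_support_swap_mul_imp_mem_support_ne hy).1) subset_rfl
  have key := hc.card_support_swap_mul_add_two (hcx ▸ hx)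
  have hN := card_le_univ (c * r).support
  have hN' := card_le_univ (swap x (c x) * c * r).support
  simp only [parts_partition, Multiset.card_add, Multiset.card_replicate]
  rw [hdisj.card_support_mul] at hN
  rw [hdisj'.card_support_mul] at hN'
  rw [hdisj.cycleType_mul, hdisj.card_support_mul, hc.cycleType, hdisj'.cycleType_mul,
    hdisj'.card_support_mul]
  simp only [Multiset.card_add, Multiset.card_singleton] at hN hN' ⊢
  omega

end Equiv.Perm

open Equiv.Perm

theorem cycleCount_eq_card_parts {m : ℕ} (σ : Perm (Fin m)) :
    cycleCount σ = σ.partition.parts.card := by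
  simp [cycleCount, parts_partition, add_comm]

theorem cycleCount_swap_mul_add_one {m : ℕ} {σ : Perm (Fin m)} {x y : Fin m} (hx : σ x = x)
    (hy : y ≠ x) : cycleCount (swap x y * σ) + 1 = cycleCount σ := by
  have hgx : (swap x y * σ) x = y := by simp [hx]
  have hσ : swap x ((swap x y * σ) x) * (swap x y * σ) = σ := by
    rw [hgx, ← mul_assoc, Equiv.swap_mul_self, one_mul]
  have := card_parts_partition_swap_mul (g := swap x y * σ) (x := x) (by rw [hgx]; exact hy)
  rw [hσ] at this
  rw [cycleCount_eq_card_parts, cycleCount_eq_card_parts, this]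

theorem cycleCount_conj {m : ℕ} (π σ : Perm (Fin m)) : cycleCount (π * σ * π⁻¹) = cycleCount σ := by
  rw [cycleCount_eq_card_parts, cycleCount_eq_card_parts,
    (partition_eq_of_isConj.1 (isConj_iff.2 ⟨π, rfl⟩)).symm]

theorem cycleCount_inv {m : ℕ} (σ : Perm (Fin m)) : cycleCount σ⁻¹ = cycleCount σ := by
  rw [cycleCount, cycleCount, support_inv, cycleType_inv]

theorem cycleCount_decomposeFin_symm_zero {n : ℕ} (e : Perm (Fin n)) :
    cycleCount (decomposeFin.symm (0, e)) = cycleCount e + 1 := by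
  have hext : decomposeFin.symm (0, e) = e.extendDomain (finSuccAboveEquiv 0) := by
    ext a
    cases a using Fin.cases with
    | zero => simp [extendDomain_apply_not_subtype]
    | succ x =>
      have hx : x.succ = (finSuccAboveEquiv 0 x : Fin (n + 1)) := by simp [finSuccAboveEquiv_apply]
      rw [decomposeFin_symm_apply_succ, hx, extendDomain_apply_image]
      simp [finSuccAboveEquiv_apply]
  have hs := card_le_univ e.support
  rw [hext, cycleCount, cycleCount, cycleType_extendDomain, card_support_extend_domain]
  simp only [Fintype.card_fin] at hs
  omega

theorem cycleCount_decomposeFin_symm {n : ℕ} (q : Fin (n + 1)) (e : Perm (Fin n)) :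
    cycleCount (decomposeFin.symm (q, e)) = cycleCount e + if q = 0 then 1 else 0 := by
  rcases eq_or_ne q 0 with rfl | hq
  · simp [cycleCount_decomposeFin_symm_zero]
  · have hsplit : decomposeFin.symm (q, e) = swap 0 q * decomposeFin.symm (0, e) := by
      ext a
      cases a using Fin.cases <;> simp
    have := cycleCount_swap_mul_add_one (decomposeFin_symm_apply_zero 0 e) hq
    rw [cycleCount_decomposeFin_symm_zero] at this
    rw [hsplit, if_neg hq]
    omega

theorem swap_apply_mem_iff {α : Type*} [DecidableEq α] {S : Finset α} {i j k : α} (hk : k ∈ S)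
    (hij : i ≠ j) (hji : j ∈ S → i ∈ S) : swap i k j ∈ S ↔ j ∈ S := by
  rcases eq_or_ne j k with rfl | hjk
  · simp [hk, hji hk]
  · rw [swap_apply_of_ne_of_ne hij.symm hjk]

theorem sum_conj_eq {M : Type*} [AddCommMonoid M] {m : ℕ} (π : Perm (Fin m))
    (F : Perm (Fin m) → M) :
    ∑ τ, F (π * τ * π⁻¹) = ∑ τ, F τ :=
  (MulAut.conj π).toEquiv.sum_comp F

theorem sum_ite_apply_zero_eq_sum_decomposeFin_symm {M : Type*} [AddCommMonoid M] {n : ℕ}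
    (b : Fin (n + 1)) (f : Perm (Fin (n + 1)) → M) :
    ∑ τ : Perm (Fin (n + 1)), (if τ 0 = b then f τ else 0)
      = ∑ e : Perm (Fin n), f (decomposeFin.symm (b, e)) := by
  rw [← decomposeFin.symm.sum_comp, Fintype.sum_prod_type]
  simp only [decomposeFin_symm_apply_zero, Finset.sum_ite_irrel, Finset.sum_const_zero,
    sum_ite_eq', mem_univ, if_true]

section CommRing

variable {R : Type*} [CommRing R]

theorem sum_ite_eq_else_one {α : Type*} [DecidableEq α] (T : Finset α) (u : α) (θ : R) :
    ∑ l ∈ T, (if l = u then θ else 1) = #T + if u ∈ T then θ - 1 else 0 := by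
  have h : ∀ l, (if l = u then θ else 1) = 1 + if l = u then θ - 1 else 0 := by
    intro l; split_ifs <;> ring
  simp only [h, sum_add_distrib, sum_ite_eq', sum_const, nsmul_one]

theorem pow_cycleCount_decomposeFin_symm (θ : R) {n : ℕ} (q : Fin (n + 1)) (e : Perm (Fin n)) :
    θ ^ cycleCount (decomposeFin.symm (q, e)) = (if q = 0 then θ else 1) * θ ^ cycleCount e := by
  rw [cycleCount_decomposeFin_symm]
  split_ifs <;> ring

theorem sum_pow_cycleCount (θ : R) (n : ℕ) :
    ∑ τ : Perm (Fin n), θ ^ cycleCount τ = ∏ k ∈ range n, (θ + k) := by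
  induction n with
  | zero => simp [cycleCount]
  | succ n ih =>
    rw [← decomposeFin.symm.sum_comp, Fintype.sum_prod_type]
    simp only [pow_cycleCount_decomposeFin_symm, ← mul_sum, ih, ← sum_mul,
      sum_ite_eq_else_one, prod_range_succ]
    simp only [card_univ, Fintype.card_fin, mem_univ, if_true]
    push_cast
    ring

theorem sum_ite_apply_eq_pow_cycleCount (θ : R) {n : ℕ} (a b : Fin (n + 1)) :
    ∑ τ : Perm (Fin (n + 1)), (if τ a = b then θ ^ cycleCount τ else 0)
      = (if a = b then θ else 1) * ∏ k ∈ range n, (θ + k) := by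
  rw [← sum_conj_eq (swap 0 a)]
  simp only [cycleCount_conj]
  simp only [swap_inv, Perm.mul_apply, swap_apply_right, swap_apply_eq_iff]
  have hcond : swap 0 a b = 0 ↔ a = b := by rw [swap_apply_eq_iff, swap_apply_left, eq_comm]
  rw [sum_ite_apply_zero_eq_sum_decomposeFin_symm, ← sum_pow_cycleCount, mul_sum]
  simp only [pow_cycleCount_decomposeFin_symm, hcond]

theorem sum_ite_apply_zero_eq_and_apply_eq_pow_cycleCount (θ : R) {n : ℕ} {b c d : Fin (n + 2)}
    (hc : c ≠ 0) (hbd : b ≠ d) :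
    ∑ τ : Perm (Fin (n + 2)), (if τ 0 = b ∧ τ c = d then θ ^ cycleCount τ else 0)
      = (if 0 = b then θ else 1) * (if c = swap 0 b d then θ else 1) *
        ∏ k ∈ range n, (θ + k) := by
  obtain ⟨t, rfl⟩ := Fin.exists_succ_eq.2 hc
  have hd : swap 0 b d ≠ 0 := by
    rw [Ne, swap_apply_eq_iff, swap_apply_left]; exact hbd.symm
  obtain ⟨s, hs⟩ := Fin.exists_succ_eq.2 hd
  rw [← hs]
  simp only [ite_and]
  rw [sum_ite_apply_zero_eq_sum_decomposeFin_symm]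
  simp only [decomposeFin_symm_apply_succ, swap_apply_eq_iff, ← hs, Fin.succ_inj,
    pow_cycleCount_decomposeFin_symm, ← mul_ite_zero]
  rw [← mul_sum, sum_ite_apply_eq_pow_cycleCount, mul_assoc]
  simp only [@eq_comm _ b 0]

theorem sum_ite_apply_eq_and_apply_eq_pow_cycleCount (θ : R) {n : ℕ} {a b c d : Fin (n + 2)}
    (hac : a ≠ c) (hbd : b ≠ d) :
    ∑ τ : Perm (Fin (n + 2)), (if τ a = b ∧ τ c = d then θ ^ cycleCount τ else 0)
      = (if a = b then θ else 1) * (if c = swap a b d then θ else 1) *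
        ∏ k ∈ range n, (θ + k) := by
  have hπc : swap 0 a c ≠ 0 := by
    rw [Ne, swap_apply_eq_iff, swap_apply_left]; exact hac.symm
  have hπb : 0 = swap 0 a b ↔ a = b := by
    rw [eq_comm, swap_apply_eq_iff, swap_apply_left, eq_comm]
  have hπ : swap 0 (swap 0 a b) (swap 0 a d) = swap 0 a (swap a b d) := by
    simpa using congrArg (· (swap 0 a d)) (swap_apply_apply (swap 0 a) a b)
  rw [← sum_conj_eq (swap 0 a)]
  simp only [cycleCount_conj]
  simp only [swap_inv, Perm.mul_apply, swap_apply_right, swap_apply_eq_iff]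
  rw [sum_ite_apply_zero_eq_and_apply_eq_pow_cycleCount θ hπc ((swap 0 a).injective.ne hbd), hπ]
  simp only [hπb, (swap 0 a).injective.eq_iff]

theorem sum_ite_mem_and_mem_pow_cycleCount (θ : R) {n : ℕ} (S : Finset (Fin (n + 2)))
    {i j : Fin (n + 2)} (hij : i ≠ j) (hji : j ∈ S → i ∈ S) :
    ∑ τ : Perm (Fin (n + 2)), (if τ i ∈ S ∧ τ j ∈ S then θ ^ cycleCount τ else 0)
      = (#S + if i ∈ S then θ - 1 else 0) * (#S - 1 + if j ∈ S then θ - 1 else 0) *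
        ∏ k ∈ range n, (θ + k) := by
  have hexpand : ∀ τ : Perm (Fin (n + 2)),
      (if τ i ∈ S ∧ τ j ∈ S then θ ^ cycleCount τ else 0)
        = ∑ k ∈ S, ∑ l ∈ S, if τ i = k ∧ τ j = l then θ ^ cycleCount τ else 0 := by
    intro τ
    simp only [ite_and, sum_ite_irrel, sum_const_zero, sum_ite_eq]
  have hinner : ∀ k ∈ S,
      ∑ l ∈ S, ∑ τ : Perm (Fin (n + 2)), (if τ i = k ∧ τ j = l then θ ^ cycleCount τ else 0)
        = (if i = k then θ else 1) * (#S - 1 + if j ∈ S then θ - 1 else 0) *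
          ∏ k ∈ range n, (θ + k) := by
    intro k hk
    have hdiag : ∑ τ : Perm (Fin (n + 2)),
        (if τ i = k ∧ τ j = k then θ ^ cycleCount τ else 0) = 0 :=
      sum_eq_zero fun τ _ => if_neg fun h => hij (τ.injective (h.1.trans h.2.symm))
    have hswap : ∀ l, j = swap i k l ↔ l = swap i k j := fun l => by
      rw [eq_comm, swap_apply_eq_iff]
    have hne : swap i k j ≠ k := by
      rw [Ne, swap_apply_eq_iff, swap_apply_right]; exact hij.symm
    rw [← sum_erase S hdiag, sum_congr rfl fun l hl =>
      sum_ite_apply_eq_and_apply_eq_pow_cycleCount θ hij (ne_of_mem_erase hl).symm]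
    simp only [← sum_mul, ← mul_sum, hswap, sum_ite_eq_else_one, mem_erase, ne_eq, hne,
      not_false_eq_true, true_and, swap_apply_mem_iff hk hij hji, card_erase_of_mem hk]
    rw [Nat.cast_sub (card_pos.2 ⟨k, hk⟩), Nat.cast_one]
  rw [sum_congr rfl fun τ _ => hexpand τ, sum_comm, sum_congr rfl fun k _ => sum_comm,
    sum_congr rfl hinner]
  simp only [← sum_mul, @eq_comm _ i, sum_ite_eq_else_one]

end CommRing

theorem ewens_inv (θ : ℝ) {m : ℕ} (σ : Perm (Fin m)) : ewens θ σ⁻¹ = ewens θ σ := by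
  rw [ewens, ewens, cycleCount_inv]

theorem sum_ite_mem_and_mem_ewens {θ : ℝ} (hθ : 0 < θ) {n : ℕ} (S : Finset (Fin (n + 2)))
    {i j : Fin (n + 2)} (hij : i ≠ j) (hji : j ∈ S → i ∈ S) :
    ∑ τ : Perm (Fin (n + 2)), (if τ i ∈ S ∧ τ j ∈ S then ewens θ τ else 0)
      = (#S + if i ∈ S then θ - 1 else 0) * (#S - 1 + if j ∈ S then θ - 1 else 0) /
        ((θ + n + 1) * (θ + n)) := by
  have hW : ∏ k ∈ range n, (θ + k) ≠ 0 := prod_ne_zero_iff.2 fun k _ => by positivity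
  have hpull : ∀ τ : Perm (Fin (n + 2)),
      (if τ i ∈ S ∧ τ j ∈ S then ewens θ τ else 0)
        = (if τ i ∈ S ∧ τ j ∈ S then θ ^ cycleCount τ else 0) / ∏ k ∈ range (n + 2), (θ + k) :=
    fun τ => by rw [ite_div, zero_div, ewens]
  rw [sum_congr rfl fun τ _ => hpull τ, ← sum_div, sum_ite_mem_and_mem_pow_cycleCount θ S hij hji,
    prod_range_succ, prod_range_succ]
  have : θ + n ≠ 0 := by positivity
  have : θ + n + 1 ≠ 0 := by positivity
  push_cast
  field_simp
  ring

theorem sum_extMeasure_smul {M : Type*} [AddCommMonoid M] [Module ℝ M] {p m : ℕ} (h : p ≤ m)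
    (θ : ℝ) (F : (Fin p ↪ Fin m) → M) :
    ∑ σ, extMeasure h θ σ • F σ
      = ∑ τ : Perm (Fin m), ewens θ τ • F ((Fin.castLEEmb h).trans τ.toEmbedding) := by
  simp only [extMeasure, sum_filter, ite_smul, zero_smul, sum_smul]
  rw [sum_comm]
  refine sum_congr rfl fun τ _ => ?_
  rw [sum_eq_single_of_mem ((Fin.castLEEmb h).trans τ.toEmbedding) (mem_univ _)]
  · exact if_pos fun _ => rfl
  · intro σ _ hσ
    exact if_neg fun hτ => hσ (DFunLike.ext _ _ fun k => (hτ k).symm)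

theorem Vmat_transpose_mul_Vmat {p m : ℕ} (σ : Fin p ↪ Fin m) :
    (Vmat σ)ᵀ * Vmat σ = diagonal fun a => if a ∈ Set.range σ then 1 else 0 := by
  ext a b
  rcases eq_or_ne a b with rfl | hab
  · by_cases ha : a ∈ Set.range σ
    · obtain ⟨y, rfl⟩ := ha
      simp [Matrix.mul_apply, Vmat, σ.injective.eq_iff]
    · simp_all [Matrix.mul_apply, Vmat, eq_comm]
  · simp only [Matrix.mul_apply, Vmat, transpose_apply, of_apply, diagonal_apply_ne _ hab]
    exact sum_eq_zero fun k _ => by split_ifs with h1 h2 <;> simp_all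

theorem Vmat_conj_apply {p m : ℕ} (σ : Fin p ↪ Fin m) (A : Matrix (Fin m) (Fin m) ℂ)
    (i j : Fin m) :
    ((Vmat σ)ᵀ * (Vmat σ * A * (Vmat σ)ᵀ) * Vmat σ) i j
      = if i ∈ Set.range σ ∧ j ∈ Set.range σ then A i j else 0 := by
  have : (Vmat σ)ᵀ * (Vmat σ * A * (Vmat σ)ᵀ) * Vmat σ
      = (Vmat σ)ᵀ * Vmat σ * A * ((Vmat σ)ᵀ * Vmat σ) := by
    simp only [Matrix.mul_assoc]
  rw [this, Vmat_transpose_mul_Vmat, mul_diagonal, diagonal_mul]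
  split_ifs <;> simp_all

theorem exists_castLE_eq_iff {p m : ℕ} (h : p ≤ m) (x : Fin m) :
    (∃ y, Fin.castLE h y = x) ↔ (x : ℕ) < p := by
  rw [← Set.mem_range, Fin.range_castLE]; rfl

theorem sum_extMeasure_smul_Vmat_conj_apply {p m : ℕ} (h : p ≤ m) {θ : ℝ} (hθ : 0 < θ)
    (A : Matrix (Fin m) (Fin m) ℂ) {i j : Fin m} (hij : i ≠ j)
    (hji : (j : ℕ) < p → (i : ℕ) < p) :
    (∑ σ : Fin p ↪ Fin m,
        extMeasure h θ σ • ((Vmat σ)ᵀ * (Vmat σ * A * (Vmat σ)ᵀ) * Vmat σ)) i j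
      = (((p + if (i : ℕ) < p then θ - 1 else 0) * (p - 1 + if (j : ℕ) < p then θ - 1 else 0) /
          ((θ + m - 1) * (θ + m - 2)) : ℝ) : ℂ) * A i j := by
  obtain ⟨n, rfl⟩ : ∃ n, m = n + 2 :=
    ⟨m - 2, by have := Fin.val_ne_of_ne hij; have := i.isLt; have := j.isLt; omega⟩
  set S := (univ : Finset (Fin p)).map (Fin.castLEEmb h)
  have hS : ∀ x, x ∈ S ↔ (x : ℕ) < p := fun x => by simp [S, exists_castLE_eq_iff]
  have hrange : ∀ (τ : Perm (Fin (n + 2))) x,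
      x ∈ Set.range ((Fin.castLEEmb h).trans τ.toEmbedding) ↔ τ⁻¹ x ∈ S := fun τ x => by
    simp [S, ← Equiv.eq_symm_apply]
  have hpull : ∀ (P : Prop) [Decidable P] (r : ℝ), (if P then r • A i j else 0)
      = (if P then r else 0) • A i j := fun P _ r => by split_ifs <;> simp
  rw [sum_extMeasure_smul, Matrix.sum_apply]
  simp only [Matrix.smul_apply, Vmat_conj_apply, hrange, smul_ite, smul_zero, hpull]
  rw [← sum_smul, ← Equiv.sum_comp (Equiv.inv (Perm (Fin (n + 2))))]
  simp only [Equiv.inv_apply, inv_inv, ewens_inv]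
  rw [sum_ite_mem_and_mem_ewens hθ S hij (by simpa only [hS] using hji), Complex.real_smul]
  have hcard : #S = p := by simp [S]
  simp only [hS, hcard]
  push_cast
  ring_nf

theorem stmt_13 {p m : ℕ} (h : p ≤ m) (θ : ℝ) (hθ : 0 < θ)
    (A : Matrix (Fin m) (Fin m) ℂ) (i j : Fin m) (hij : (i : ℕ) < (j : ℕ)) :
    (((j : ℕ) < p →
        (∑ σ : Fin p ↪ Fin m,
            extMeasure h θ σ • ((Vmat σ)ᵀ * (Vmat σ * A * (Vmat σ)ᵀ) * Vmat σ)) i j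
          = (((θ + p - 1) * (θ + p - 2) / ((θ + m - 1) * (θ + m - 2)) : ℝ) : ℂ) * A i j)
      ∧ ((i : ℕ) < p → p ≤ (j : ℕ) →
        (∑ σ : Fin p ↪ Fin m,
            extMeasure h θ σ • ((Vmat σ)ᵀ * (Vmat σ * A * (Vmat σ)ᵀ) * Vmat σ)) i j
          = (((p - 1) * (θ + p - 1) / ((θ + m - 1) * (θ + m - 2)) : ℝ) : ℂ) * A i j)
      ∧ (p ≤ (i : ℕ) →
        (∑ σ : Fin p ↪ Fin m,
            extMeasure h θ σ • ((Vmat σ)ᵀ * (Vmat σ * A * (Vmat σ)ᵀ) * Vmat σ)) i j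
          = ((p * (p - 1) / ((θ + m - 1) * (θ + m - 2)) : ℝ) : ℂ) * A i j)) := by
  have hne : i ≠ j := Fin.ne_of_lt hij
  have kernel := fun hji => sum_extMeasure_smul_Vmat_conj_apply h hθ A hne hji
  refine ⟨fun hjp => ?_, fun hip hpj => ?_, fun hpi => ?_⟩
  · rw [kernel fun _ => hij.trans hjp, if_pos (hij.trans hjp), if_pos hjp]
    ring_nf
  · rw [kernel fun hjp => absurd hjp (not_lt.2 hpj), if_pos hip, if_neg (not_lt.2 hpj)]
    ring_nf
  · rw [kernel fun hjp => absurd (hij.trans hjp) (not_lt.2 hpi), if_neg (not_lt.2 hpi),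
      if_neg (not_lt.2 (hpi.trans hij.le))]
    ring_nf
end
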